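/- Let (R, m, k) be a commutative noetherian local ring, let S = R[[X_1, …, X_n]] with maximal ideal n = (m, X_1, …, X_n). Let 0 = m_0 < m_1 < ⋯ < m_{t-1} < m_t = n be integers and let f_1, …, f_t ∈ n be elements such that for every i = 1, …, t: (a) f_i lies in the subring R[[X_1, …, X_{m_i}]] of S (i.e., f_i involves only the variables X_1, …, X_{m_i}), and (b) the coefficient of the monomial X_j in f_i (equivalently, the value of ∂f_i/∂X_j at (0, …, 0)) is a unit of R for some j > m_{i-1}. Then f_i ∉ n² + (f_1, …, f_{i-1}) for every i = 1, …, t. -/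

import Mathlib

universe u

lemma aux_eq_zero_or_eq_zero {σ : Type*} (j : σ) (a b : σ →₀ ℕ)
    (h : a + b = Finsupp.single j 1) : a = 0 ∨ b = 0 := by
  classical
  have hk : ∀ k, a k + b k = (Finsupp.single j 1) k := fun k => by
    rw [← h]; simp
  by_cases hj : a j = 0
  · left
    ext k
    have h1 := hk k
    rw [Finsupp.single_apply] at h1
    simp only [Finsupp.coe_zero, Pi.zero_apply]
    by_cases hkj : j = k
    · subst hkj; exact hj
    · rw [if_neg hkj] at h1; omega
  · right
    ext k
    have h1 := hk k
    have h2 := hk j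
    rw [Finsupp.single_apply, if_pos rfl] at h2
    rw [Finsupp.single_apply] at h1
    simp only [Finsupp.coe_zero, Pi.zero_apply]
    by_cases hkj : j = k
    · subst hkj; omega
    · rw [if_neg hkj] at h1; omega

/-- Let `(R,𝔪,k)` be a commutative noetherian local ring, `S = R[[X₁, …, Xₙ]]` with
maximal ideal `𝔫 = (𝔪, X₁, …, Xₙ)`.  Let `0 = m₀ < m₁ < ⋯ < mₜ = n` and let
`f₁, …, fₜ ∈ 𝔫` be such that `fᵢ` involves only the variables `X₁, …, X_{mᵢ}` and some
coefficient `∂fᵢ/∂Xⱼ(0)` with `j > mᵢ₋₁` is a unit of `R`.  Then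
`fᵢ ∉ 𝔫² + (f₁, …, fᵢ₋₁)` for every `i = 1, …, t`. -/
theorem notMem_sq_add_span_of_unit_coeff
    {R : Type u} [CommRing R] [IsNoetherianRing R] [IsLocalRing R]
    (n t : ℕ) (m : Fin (t + 1) → ℕ) (hmono : StrictMono m)
    (hm0 : m 0 = 0) (hmt : m (Fin.last t) = n)
    (f : Fin t → MvPowerSeries (Fin n) R)
    (hmem : ∀ i, f i ∈ IsLocalRing.maximalIdeal (MvPowerSeries (Fin n) R))
    (ha : ∀ (i : Fin t) (d : Fin n →₀ ℕ),
      (∃ j : Fin n, m i.succ ≤ (j : ℕ) ∧ d j ≠ 0) → MvPowerSeries.coeff d (f i) = 0)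
    (hb : ∀ i : Fin t, ∃ j : Fin n, m i.castSucc ≤ (j : ℕ) ∧
      IsUnit (MvPowerSeries.coeff (Finsupp.single j 1) (f i))) :
    ∀ i : Fin t, f i ∉
      (IsLocalRing.maximalIdeal (MvPowerSeries (Fin n) R)) ^ 2 +
        Ideal.span (f '' {j | j < i}) := by
  intro i hi
  obtain ⟨j, hj, hu⟩ := hb i
  -- constant coefficients of elements of the maximal ideal lie in 𝔪
  have hconst : ∀ g ∈ IsLocalRing.maximalIdeal (MvPowerSeries (Fin n) R),
      MvPowerSeries.constantCoeff g ∈ IsLocalRing.maximalIdeal R := by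
    intro g hg
    rw [IsLocalRing.mem_maximalIdeal, mem_nonunits_iff] at hg ⊢
    exact fun h => hg (MvPowerSeries.isUnit_iff_constantCoeff.mpr h)
  -- it suffices to show the coefficient of X_j of f i is in 𝔪
  suffices h : (MvPowerSeries.coeff (Finsupp.single j 1)) (f i) ∈
      IsLocalRing.maximalIdeal R by
    rw [IsLocalRing.mem_maximalIdeal, mem_nonunits_iff] at h
    exact h hu
  obtain ⟨p, hp, q, hq, hpq⟩ := Submodule.mem_sup.mp hi
  rw [← hpq, map_add]
  refine Ideal.add_mem _ ?_ ?_
  · -- the 𝔫² part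
    rw [sq] at hp
    refine Submodule.mul_induction_on hp (fun x hx y hy => ?_)
      (fun x y hx hy => by rw [map_add]; exact Ideal.add_mem _ hx hy)
    rw [MvPowerSeries.coeff_mul]
    refine Ideal.sum_mem _ (fun c hc => ?_)
    rcases aux_eq_zero_or_eq_zero j c.1 c.2 (Finset.HasAntidiagonal.mem_antidiagonal.mp hc) with h0 | h0
    · rw [h0, MvPowerSeries.coeff_zero_eq_constantCoeff]
      exact Ideal.mul_mem_right _ _ (hconst x hx)
    · rw [h0, MvPowerSeries.coeff_zero_eq_constantCoeff]
      exact Ideal.mul_mem_left _ _ (hconst y hy)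
  · -- the span part; prove a stronger statement by span induction
    have key : (MvPowerSeries.constantCoeff) q ∈ IsLocalRing.maximalIdeal R ∧
        (MvPowerSeries.coeff (Finsupp.single j 1)) q ∈ IsLocalRing.maximalIdeal R := by
      refine Submodule.span_induction ?_ ?_ ?_ ?_ hq
      · rintro g ⟨l, hl, rfl⟩
        refine ⟨hconst _ (hmem l), ?_⟩
        rw [ha l (Finsupp.single j 1) ⟨j, ?_, by simp⟩]
        · exact Ideal.zero_mem _
        · refine le_trans (le_trans (hmono.monotone ?_) hj) le_rfl
          have : (l : ℕ) < (i : ℕ) := hl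
          rw [Fin.le_def]
          simp only [Fin.val_succ, Fin.coe_castSucc]
          omega
      · simp only [map_zero]
        exact ⟨Ideal.zero_mem _, Ideal.zero_mem _⟩
      · intro x y _ _ hx hy
        rw [map_add, map_add]
        exact ⟨Ideal.add_mem _ hx.1 hy.1, Ideal.add_mem _ hx.2 hy.2⟩
      · intro s x _ hx
        rw [smul_eq_mul, map_mul, MvPowerSeries.coeff_mul]
        refine ⟨Ideal.mul_mem_left _ _ hx.1, Ideal.sum_mem _ (fun c hc => ?_)⟩
        have hsum := Finset.HasAntidiagonal.mem_antidiagonal.mp hc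
        rcases aux_eq_zero_or_eq_zero j c.1 c.2 hsum with h0 | h0
        · have hc2 : c.2 = Finsupp.single j 1 := by rw [← hsum, h0, zero_add]
          rw [hc2]
          exact Ideal.mul_mem_left _ _ hx.2
        · rw [h0, MvPowerSeries.coeff_zero_eq_constantCoeff]
          exact Ideal.mul_mem_left _ _ hx.1
    exact key.2
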